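/- Let Λ be a W-stable lattice with Q^∨ ⊆ Λ ⊆ P^∨ and let Ω_Λ = π(Λ ⋊ W) ≤ Ω. For minuscule indices i, j: (a) ω_i ∈ Ω_Λ iff ϖ_i^∨ ∈ Λ; (b) Ω_Λ maps 𝒜₀ ∩ Λ to itself; (c) ω_i Ω_Λ = ω_j Ω_Λ iff ϖ_i^∨ − ϖ_j^∨ ∈ Λ. -/

import Mathlib

open scoped RealInnerProductSpace Pointwise

noncomputable section

variable (E : Type) [NormedAddCommGroup E] [InnerProductSpace ℝ E] [FiniteDimensional ℝ E]

/-- The coroot `x^∨ = 2x/⟪x,x⟫` of a vector, under the identification of `V` with `V*`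
via the inner product. -/
def coroot (x : E) : E := (2 / ⟪x, x⟫) • x

/-- Data of an irreducible reduced root system `Φ` in a Euclidean space `E`,
together with a system of simple roots `α i`, the highest root `α₀` with its coefficients
`n i`, and the fundamental coweights `ϖ i`. -/
structure KPData (r : ℕ) where
  Φ : Finset E
  Φ_nonempty : Φ.Nonempty
  root_ne_zero : ∀ x ∈ Φ, x ≠ (0 : E)
  span_eq_top : Submodule.span ℝ (Φ : Set E) = ⊤
  reduced : ∀ x ∈ Φ, ∀ t : ℝ, t • x ∈ Φ → t = 1 ∨ t = -1
  integrality : ∀ x ∈ Φ, ∀ y ∈ Φ, ∃ m : ℤ, ⟪coroot E x, y⟫ = (m : ℝ)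
  reflect_mem : ∀ x ∈ Φ, ∀ y ∈ Φ, y - ⟪coroot E x, y⟫ • x ∈ Φ
  irreducible : ∀ S ⊆ (Φ : Set E), (∀ x ∈ S, ∀ y ∈ (Φ : Set E) \ S, ⟪x, y⟫ = 0) →
    S = ∅ ∨ S = (Φ : Set E)
  α : Fin r → E
  α_mem : ∀ i, α i ∈ Φ
  α_indep : LinearIndependent ℝ α
  pos_or_neg : ∀ x ∈ Φ, (∃ c : Fin r → ℝ, (∀ i, 0 ≤ c i) ∧ x = ∑ i, c i • α i) ∨
    (∃ c : Fin r → ℝ, (∀ i, 0 ≤ c i) ∧ x = -∑ i, c i • α i)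
  ϖ : Fin r → E
  ϖ_pair : ∀ i j, ⟪ϖ i, α j⟫ = if i = j then 1 else 0
  n : Fin r → ℕ
  n_pos : ∀ i, 0 < n i
  α₀ : E
  α₀_mem : α₀ ∈ Φ
  α₀_eq : α₀ = ∑ i, (n i : ℝ) • α i
  α₀_highest : ∀ x ∈ Φ, ∃ c : Fin r → ℝ, (∀ i, 0 ≤ c i) ∧ α₀ - x = ∑ i, c i • α i

namespace KPData

variable {E} {r : ℕ} (D : KPData E r)

/-- The set of positive roots. -/
def posRoots : Set E :=
  {x ∈ (D.Φ : Set E) | ∃ c : Fin r → ℝ, (∀ i, 0 ≤ c i) ∧ x = ∑ i, c i • D.α i}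

/-- The closed fundamental alcove `𝒜₀`. -/
def alcove : Set E := {l | (∀ i, 0 ≤ ⟪l, D.α i⟫) ∧ ⟪l, D.α₀⟫ ≤ 1}

/-- The closed fundamental Weyl chamber `𝒞₀`. -/
def chamber : Set E := {l | ∀ i, 0 ≤ ⟪l, D.α i⟫}

/-- The coroot lattice `Q^∨ = ℤΦ^∨`. -/
def corootLattice : AddSubgroup E := AddSubgroup.closure (coroot E '' (D.Φ : Set E))

/-- The root lattice `Q = ℤΦ`. -/
def rootLattice : AddSubgroup E := AddSubgroup.closure (D.Φ : Set E)

/-- The coweight lattice `P^∨`, spanned by the fundamental coweights. -/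
def coweightLattice : AddSubgroup E := AddSubgroup.closure (Set.range D.ϖ)

/-- The weight lattice `P`. -/
def weightLattice : AddSubgroup E where
  carrier := {x | ∀ y ∈ D.Φ, ∃ m : ℤ, ⟪coroot E y, x⟫ = (m : ℝ)}
  zero_mem' := fun y _ => ⟨0, by simp⟩
  add_mem' := by
    rintro a b ha hb y hy
    obtain ⟨m, hm⟩ := ha y hy
    obtain ⟨m', hm'⟩ := hb y hy
    exact ⟨m + m', by rw [inner_add_right, hm, hm']; push_cast; ring⟩
  neg_mem' := by
    rintro a ha y hy
    obtain ⟨m, hm⟩ := ha y hy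
    exact ⟨-m, by rw [inner_neg_right, hm]; push_cast; ring⟩

/-- The reflection in the hyperplane orthogonal to `x`, as an affine automorphism. -/
def refl (x : E) : E ≃ᵃ[ℝ] E :=
  ((Submodule.reflection (ℝ ∙ x)ᗮ).toLinearEquiv).toAffineEquiv

/-- Translation by a vector, as an affine automorphism. -/
def transl (v : E) : E ≃ᵃ[ℝ] E := AffineEquiv.constVAdd ℝ E v

/-- The finite Weyl group `W`, realized as a group of affine automorphisms. -/
def weylGroup : Subgroup (E ≃ᵃ[ℝ] E) :=
  Subgroup.closure {f | ∃ x ∈ D.Φ, f = refl x}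

/-- The intermediate affine Weyl group `W_Λ = Λ ⋊ W` attached to a lattice `Λ`. -/
def affWeylOf (Λ : AddSubgroup E) : Subgroup (E ≃ᵃ[ℝ] E) :=
  Subgroup.closure ({f | ∃ v ∈ Λ, f = transl v} ∪ {f | ∃ x ∈ D.Φ, f = refl x})

/-- The affine Weyl group `W_a = Q^∨ ⋊ W`. -/
def affWeyl : Subgroup (E ≃ᵃ[ℝ] E) := D.affWeylOf D.corootLattice

/-- The extended affine Weyl group `Ŵ_a = P^∨ ⋊ W`. -/
def extAffWeyl : Subgroup (E ≃ᵃ[ℝ] E) := D.affWeylOf D.coweightLattice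

/-- The stabilizer `Ω` of the fundamental alcove in the extended affine Weyl group. -/
def alcoveStab : Subgroup (E ≃ᵃ[ℝ] E) where
  carrier := {f | f ∈ D.extAffWeyl ∧ f '' D.alcove = D.alcove}
  one_mem' := ⟨one_mem _, by simp [AffineEquiv.coe_one, Set.image_id]⟩
  mul_mem' := by
    rintro a b ⟨ha, ha'⟩ ⟨hb, hb'⟩
    exact ⟨mul_mem ha hb, by rw [AffineEquiv.coe_mul, Set.image_comp, hb', ha']⟩
  inv_mem' := by
    rintro f ⟨hf, hf'⟩
    refine ⟨inv_mem hf, ?_⟩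
    conv_lhs => rw [← hf']
    rw [show ⇑(f⁻¹) = ⇑f.symm from rfl, ← Set.image_comp]
    simp [Function.comp_def]

/-- The Komrakov–Premet polytope `F`. -/
def KP : Set E :=
  {l ∈ D.alcove | ∀ i, D.n i = 1 → ⟪l, D.α₀ + D.α i⟫ ≤ 1}

/-- A closed, connected fundamental domain for a group of affine transformations. -/
def IsFundDom (G : Subgroup (E ≃ᵃ[ℝ] E)) (F : Set E) : Prop :=
  IsClosed F ∧ IsConnected F ∧ (⋃ g ∈ G, (g : E ≃ᵃ[ℝ] E) '' F) = Set.univ ∧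
    ∀ g ∈ G, g ≠ 1 → interior ((g : E ≃ᵃ[ℝ] E) '' F ∩ F) = ∅

/-- The length of a Weyl group element: the number of positive roots sent to negative roots. -/
def len (w : E ≃ᵃ[ℝ] E) : ℕ :=
  Nat.card {x : E // x ∈ D.posRoots ∧ w x ∈ Neg.neg '' D.posRoots}

end KPData

open KPData

variable {E} {r : ℕ}

set_option linter.unusedSectionVars false
namespace KPData

variable (D : KPData E r)

/-- A `W`-stable lattice between the coroot lattice and the coweight lattice. -/
def IsWLattice (Λ : AddSubgroup E) : Prop :=
  D.corootLattice ≤ Λ ∧ Λ ≤ D.coweightLattice ∧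
    ∀ w ∈ D.weylGroup, ∀ x ∈ Λ, (w : E ≃ᵃ[ℝ] E) x ∈ Λ

/-- The subgroup `Ω_Λ = π(Λ ⋊ W)` of `Ω` attached to a `W`-lattice `Λ`; since
`W_a ≤ Λ ⋊ W` and `Ŵ_a = W_a ⋊ Ω`, it coincides with `(Λ ⋊ W) ∩ Ω`. -/
def OmegaOf (Λ : AddSubgroup E) : Subgroup (E ≃ᵃ[ℝ] E) :=
  D.affWeylOf Λ ⊓ D.alcoveStab

lemma transl_add (a b : E) : (transl (a + b) : E ≃ᵃ[ℝ] E) = transl a * transl b := by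
  show AffineEquiv.constVAdd ℝ E (a + b) = _
  rw [AffineEquiv.constVAdd_add]
  rfl

lemma transl_neg (a : E) : (transl (-a) : E ≃ᵃ[ℝ] E) = (transl a)⁻¹ := by
  show AffineEquiv.constVAdd ℝ E (-a) = _
  rw [← AffineEquiv.constVAdd_symm]
  rfl

lemma transl_zero : (transl (0 : E) : E ≃ᵃ[ℝ] E) = 1 := by
  show AffineEquiv.constVAdd ℝ E 0 = _
  rw [AffineEquiv.constVAdd_zero]
  rfl

/-- The `W`-lattice `π⁻¹(H) ∩ P^∨` attached to a subgroup `H` of `Ω`; since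
`π⁻¹(H) = W_a · H`, a coweight `v` belongs to it iff `t_v ∈ W_a ⊔ H`. -/
def latticeOf (H : Subgroup (E ≃ᵃ[ℝ] E)) : AddSubgroup E where
  carrier := {v | v ∈ D.coweightLattice ∧ (transl v : E ≃ᵃ[ℝ] E) ∈ D.affWeyl ⊔ H}
  zero_mem' := ⟨zero_mem _, by rw [transl_zero]; exact one_mem _⟩
  add_mem' := by
    rintro a b ⟨ha, ha'⟩ ⟨hb, hb'⟩
    exact ⟨add_mem ha hb, by rw [transl_add]; exact mul_mem ha' hb'⟩
  neg_mem' := by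
    rintro a ⟨ha, ha'⟩
    exact ⟨neg_mem ha, by rw [transl_neg]; exact inv_mem ha'⟩

end KPData

/-! Everything rests on one invariant: each element of `Λ ⋊ W` maps `Λ` onto itself, as one
checks on the generators (translations by `Λ`, and reflections by `W`-stability). Hence
`t_v ∈ Λ ⋊ W` iff `v = t_v 0 ∈ Λ`, which gives (a), and (c) after writing
`(t_a u)⁻¹ (t_b v) = u⁻¹ t_{b-a} v`; (b) is the invariant together with `ω 𝒜₀ = 𝒜₀`. -/

namespace KPData

variable {D : KPData E r} {Λ : AddSubgroup E}

lemma transl_apply (v x : E) : (transl v : E ≃ᵃ[ℝ] E) x = v + x := rfl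

lemma transl_mem_affWeylOf {v : E} (hv : v ∈ Λ) : (transl v : E ≃ᵃ[ℝ] E) ∈ D.affWeylOf Λ :=
  Subgroup.subset_closure (Or.inl ⟨v, hv, rfl⟩)

lemma weylGroup_le_affWeylOf (D : KPData E r) (Λ : AddSubgroup E) :
    D.weylGroup ≤ D.affWeylOf Λ :=
  Subgroup.closure_mono Set.subset_union_right

lemma apply_mem_iff_of_mem_weylGroup (hΛ : ∀ w ∈ D.weylGroup, ∀ x ∈ Λ, (w : E ≃ᵃ[ℝ] E) x ∈ Λ)
    {w : E ≃ᵃ[ℝ] E} (hw : w ∈ D.weylGroup) (x : E) : w x ∈ Λ ↔ x ∈ Λ := by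
  refine ⟨fun h => ?_, hΛ w hw x⟩
  simpa [AffineEquiv.inv_def] using hΛ w⁻¹ (inv_mem hw) _ h

lemma apply_mem_iff_of_mem_affWeylOf
    (hΛ : ∀ w ∈ D.weylGroup, ∀ x ∈ Λ, (w : E ≃ᵃ[ℝ] E) x ∈ Λ)
    {f : E ≃ᵃ[ℝ] E} (hf : f ∈ D.affWeylOf Λ) (x : E) : f x ∈ Λ ↔ x ∈ Λ := by
  induction hf using Subgroup.closure_induction generalizing x with
  | mem f hf =>
    rcases hf with ⟨v, hv, rfl⟩ | ⟨y, hy, rfl⟩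
    · exact add_mem_cancel_left hv
    · exact apply_mem_iff_of_mem_weylGroup hΛ (Subgroup.subset_closure ⟨y, hy, rfl⟩) x
  | one => rfl
  | mul f g _ _ ihf ihg => exact (ihf (g x)).trans (ihg x)
  | inv f _ ih => simpa [AffineEquiv.inv_def] using (ih (f⁻¹ x)).symm

lemma transl_mem_affWeylOf_iff (hΛ : ∀ w ∈ D.weylGroup, ∀ x ∈ Λ, (w : E ≃ᵃ[ℝ] E) x ∈ Λ)
    (v : E) : (transl v : E ≃ᵃ[ℝ] E) ∈ D.affWeylOf Λ ↔ v ∈ Λ := by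
  refine ⟨fun h => ?_, transl_mem_affWeylOf⟩
  simpa [transl_apply] using (apply_mem_iff_of_mem_affWeylOf hΛ h 0).2 (zero_mem Λ)

lemma transl_mul_mem_affWeylOf_iff
    (hΛ : ∀ w ∈ D.weylGroup, ∀ x ∈ Λ, (w : E ≃ᵃ[ℝ] E) x ∈ Λ)
    {w : E ≃ᵃ[ℝ] E} (hw : w ∈ D.weylGroup) (v : E) :
    transl v * w ∈ D.affWeylOf Λ ↔ v ∈ Λ :=
  (Subgroup.mul_mem_cancel_right _ (weylGroup_le_affWeylOf D Λ hw)).trans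
    (transl_mem_affWeylOf_iff hΛ v)

lemma transl_mul_inv_mul_transl_mul (a b : E) (u v : E ≃ᵃ[ℝ] E) :
    (transl a * u)⁻¹ * (transl b * v) = u⁻¹ * (transl (b - a) * v) := by
  rw [sub_eq_neg_add, transl_add, transl_neg]
  group

lemma transl_mul_inv_mul_transl_mul_mem_affWeylOf_iff
    (hΛ : ∀ w ∈ D.weylGroup, ∀ x ∈ Λ, (w : E ≃ᵃ[ℝ] E) x ∈ Λ)
    {u v : E ≃ᵃ[ℝ] E} (hu : u ∈ D.weylGroup) (hv : v ∈ D.weylGroup) (a b : E) :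
    (transl a * u)⁻¹ * (transl b * v) ∈ D.affWeylOf Λ ↔ a - b ∈ Λ := by
  rw [transl_mul_inv_mul_transl_mul, Subgroup.mul_mem_cancel_left _
    (inv_mem (weylGroup_le_affWeylOf D Λ hu)), transl_mul_mem_affWeylOf_iff hΛ hv,
    sub_mem_comm_iff]

lemma mapsTo_alcove_of_mem_alcoveStab {f : E ≃ᵃ[ℝ] E} (hf : f ∈ D.alcoveStab) :
    Set.MapsTo f D.alcove D.alcove :=
  fun _ hx => hf.2 ▸ Set.mem_image_of_mem f hx

end KPData

theorem OmegaOf_properties_general (D : KPData E r) (Λ : AddSubgroup E) (hΛ : D.IsWLattice Λ)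
    (i j : Fin r) (wi wj : E ≃ᵃ[ℝ] E) (hwi : wi ∈ D.weylGroup) (hwj : wj ∈ D.weylGroup)
    (hΩi : transl (D.ϖ i) * wi ∈ D.alcoveStab) (hΩj : transl (D.ϖ j) * wj ∈ D.alcoveStab) :
    (transl (D.ϖ i) * wi ∈ D.OmegaOf Λ ↔ D.ϖ i ∈ Λ) ∧
    (∀ ω ∈ D.OmegaOf Λ, ∀ x ∈ D.alcove ∩ (Λ : Set E), ω x ∈ D.alcove ∩ (Λ : Set E)) ∧
    ((transl (D.ϖ i) * wi) • (D.OmegaOf Λ : Set (E ≃ᵃ[ℝ] E))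
        = (transl (D.ϖ j) * wj) • (D.OmegaOf Λ : Set (E ≃ᵃ[ℝ] E)) ↔ D.ϖ i - D.ϖ j ∈ Λ) := by
  have hW := hΛ.2.2
  refine ⟨?_, ?_, ?_⟩
  · rw [OmegaOf, Subgroup.mem_inf, transl_mul_mem_affWeylOf_iff hW hwi, and_iff_left hΩi]
  · rintro ω ⟨hωΛ, hωΩ⟩ x ⟨hxA, hxΛ⟩
    exact ⟨mapsTo_alcove_of_mem_alcoveStab hωΩ hxA,
      (apply_mem_iff_of_mem_affWeylOf hW hωΛ x).2 hxΛ⟩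
  · rw [leftCoset_eq_iff, OmegaOf, Subgroup.mem_inf,
      transl_mul_inv_mul_transl_mul_mem_affWeylOf_iff hW hwi hwj,
      and_iff_left (mul_mem (inv_mem hΩi) hΩj)]

/-- For a W-lattice `Λ` and minuscule indices `i, j`:
(a) `ω_i ∈ Ω_Λ` iff `ϖ_i^∨ ∈ Λ`; (b) `Ω_Λ` maps `𝒜₀ ∩ Λ` to itself;
(c) `ω_i Ω_Λ = ω_j Ω_Λ` iff `ϖ_i^∨ − ϖ_j^∨ ∈ Λ`. -/
theorem OmegaOf_properties (D : KPData E r) (Λ : AddSubgroup E) (hΛ : D.IsWLattice Λ)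
    (i j : Fin r) (hi : D.n i = 1) (hj : D.n j = 1)
    (wi wj : E ≃ᵃ[ℝ] E) (hwi : wi ∈ D.weylGroup) (hwj : wj ∈ D.weylGroup)
    (hΩi : transl (D.ϖ i) * wi ∈ D.alcoveStab) (hΩj : transl (D.ϖ j) * wj ∈ D.alcoveStab) :
    (transl (D.ϖ i) * wi ∈ D.OmegaOf Λ ↔ D.ϖ i ∈ Λ) ∧
    (∀ ω ∈ D.OmegaOf Λ, ∀ x ∈ D.alcove ∩ (Λ : Set E), ω x ∈ D.alcove ∩ (Λ : Set E)) ∧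
    ((transl (D.ϖ i) * wi) • (D.OmegaOf Λ : Set (E ≃ᵃ[ℝ] E))
        = (transl (D.ϖ j) * wj) • (D.OmegaOf Λ : Set (E ≃ᵃ[ℝ] E)) ↔ D.ϖ i - D.ϖ j ∈ Λ) :=
  OmegaOf_properties_general D Λ hΛ i j wi wj hwi hwj hΩi hΩj
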